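/- arXiv:1609.02511 — 4 statements merged into one kernel-verified Lean document; each statement's English description precedes it below -/
import Mathlib

section
/- Let P = (p_{i,j}) be an irreducible stochastic matrix on a finite index set I, fix j ∈ I, and let t_i ≥ 0 for all i. Then the discrete Poisson problem T_i = t_i + Σ_{k∈I} p_{i,k} T_k for i ≠ j, with boundary condition T_j = 0, has at most one solution (T_i)_{i∈I}. -/
/-!
The difference of two solutions is `P`-harmonic off `j` and vanishes at `j`. By the maximum
principle, a function harmonic off `j` attains its maximum at `j`: the set where the maximum
is attained is closed under the transitions of `P` as long as it avoids `j`, and irreducibility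
leads from every state to `j`. Applied to both differences this forces them to vanish.
-/

open Finset

namespace Matrix

variable {I R : Type*} [Fintype I]

theorem pow_apply_eq_zero_of_forall_mem [DecidableEq I] [Semiring R] (P : Matrix I I R)
    {S : Set I} (hS : ∀ i ∈ S, ∀ k, P i k ≠ 0 → k ∈ S) (n : ℕ) {i k : I} (hi : i ∈ S)
    (hk : k ∉ S) :
    (P ^ n) i k = 0 := by
  induction n generalizing i with
  | zero => exact one_apply_ne (ne_of_mem_of_not_mem hi hk)
  | succ n ih =>
    rw [pow_succ', mul_apply]
    refine sum_eq_zero fun l _ => ?_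
    by_cases hPil : P i l = 0
    · rw [hPil, zero_mul]
    · rw [ih (hS i hi l hPil), mul_zero]

variable {P : Matrix I I ℝ}

theorem apply_eq_of_harmonic_at_max (hP : ∀ i k, 0 ≤ P i k) (hProw : ∀ i, ∑ k, P i k = 1)
    {D : I → ℝ} {i : I} (hmax : ∀ k, D k ≤ D i) (hharm : D i = ∑ k, P i k * D k)
    {k : I} (hik : P i k ≠ 0) : D k = D i := by
  have hsum : ∑ l, P i l * (D i - D l) = 0 := by
    simp only [mul_sub, sum_sub_distrib, ← sum_mul, hProw, one_mul, ← hharm, sub_self]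
  have hterm := (sum_eq_zero_iff_of_nonneg fun l _ =>
    mul_nonneg (hP i l) (sub_nonneg.2 (hmax l))).1 hsum k (mem_univ k)
  linarith [(mul_eq_zero.1 hterm).resolve_left hik]

theorem apply_le_apply_of_harmonic_off [DecidableEq I] (hP : ∀ i k, 0 ≤ P i k)
    (hProw : ∀ i, ∑ k, P i k = 1)
    (hirr : ∀ i k : I, ∃ n : ℕ, 0 < (P ^ n) i k) {j : I} {D : I → ℝ}
    (hharm : ∀ i, i ≠ j → D i = ∑ k, P i k * D k) (i : I) : D i ≤ D j := by
  have : Nonempty I := ⟨j⟩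
  obtain ⟨m, hm⟩ := Finite.exists_max D
  by_contra! hj
  set S := {l | D l = D m}
  have hjS : j ∉ S := fun (h : D j = D m) => by linarith [hm i]
  have hS : ∀ l ∈ S, ∀ k, P l k ≠ 0 → k ∈ S := by
    intro l (hl : D l = D m) k hlk
    have hlj : l ≠ j := by rintro rfl; exact hjS hl
    exact (apply_eq_of_harmonic_at_max hP hProw (hl ▸ hm) (hharm l hlj) hlk).trans hl
  obtain ⟨n, hn⟩ := hirr m j
  exact hn.ne' (pow_apply_eq_zero_of_forall_mem P hS n rfl hjS)

end Matrix

theorem stmt_2_general {I : Type*} [Fintype I] [DecidableEq I]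
    (P : Matrix I I ℝ)
    (hPnonneg : ∀ i k, 0 ≤ P i k)
    (hProw : ∀ i, ∑ k, P i k = 1)
    (hirr : ∀ i k : I, ∃ n : ℕ, 0 < (P ^ n) i k)
    (j : I) (t : I → ℝ)
    (T T' : I → ℝ)
    (hTj : T j = 0) (hT'j : T' j = 0)
    (hT : ∀ i, i ≠ j → T i = t i + ∑ k, P i k * T k)
    (hT' : ∀ i, i ≠ j → T' i = t i + ∑ k, P i k * T' k) :
    T = T' := by
  have harmonic_sub : ∀ {U U' : I → ℝ},
      (∀ i, i ≠ j → U i = t i + ∑ k, P i k * U k) →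
      (∀ i, i ≠ j → U' i = t i + ∑ k, P i k * U' k) →
      ∀ i, i ≠ j → U i - U' i = ∑ k, P i k * (U k - U' k) := by
    intro U U' hU hU' i hi
    simp only [mul_sub, sum_sub_distrib, hU i hi, hU' i hi]
    ring
  funext i
  have hle := Matrix.apply_le_apply_of_harmonic_off hPnonneg hProw hirr (harmonic_sub hT hT') i
  have hge := Matrix.apply_le_apply_of_harmonic_off hPnonneg hProw hirr (harmonic_sub hT' hT) i
  linarith

/-- For an irreducible stochastic matrix `P` on a finite index set `I`,
a fixed target `j` and nonnegative `t`, the discrete Poisson problem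
`T i = t i + ∑ k, P i k * T k` for `i ≠ j`, with `T j = 0`, has at most one solution. -/
theorem stmt_2 {I : Type*} [Fintype I] [DecidableEq I]
    (P : Matrix I I ℝ)
    (hPnonneg : ∀ i k, 0 ≤ P i k)
    (hProw : ∀ i, ∑ k, P i k = 1)
    (hirr : ∀ i k : I, ∃ n : ℕ, 0 < (P ^ n) i k)
    (j : I) (t : I → ℝ) (ht : ∀ i, 0 ≤ t i)
    (T T' : I → ℝ)
    (hTj : T j = 0) (hT'j : T' j = 0)
    (hT : ∀ i, i ≠ j → T i = t i + ∑ k, P i k * T k)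
    (hT' : ∀ i, i ≠ j → T' i = t i + ∑ k, P i k * T' k) :
    T = T' :=
  stmt_2_general P hPnonneg hProw hirr j t T T' hTj hT'j hT hT'
end

section
/- Every finite stochastic matrix (p_{i,j})_{i,j∈I} admits at least one invariant probability distribution, i.e., a vector (π_i) with π_i ≥ 0, Σ_i π_i = 1, and π_j = Σ_i π_i p_{i,j} for all j. -/
/-!
Krylov–Bogolyubov averaging. For a continuous linear map `T` preserving a compact convex set
`K` and any `x ∈ K`, the Cesàro means `(n + 1)⁻¹ ∑_{k ≤ n} Tᵏ x` stay in `K`, and `T` moves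
the `n`-th mean by `(n + 1)⁻¹ (Tⁿ⁺¹ x - x)`, which tends to `0` because `K` is bounded.
A limit point of the means is therefore fixed by `T`. The map `π ↦ π P` of a stochastic
matrix preserves the standard simplex, so it has a fixed point there.
-/

open Filter Topology Finset Matrix

namespace ContinuousLinearMap

variable {E : Type*} [NormedAddCommGroup E] [NormedSpace ℝ E] (T : E →L[ℝ] E) (x : E)
  {K : Set E}

lemma pow_apply_mem (hT : Set.MapsTo T K K) (hx : x ∈ K) (k : ℕ) : (T ^ k) x ∈ K := by
  rw [pow_apply_eq_iterate]
  exact hT.iterate k hx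

noncomputable def cesaroMean (n : ℕ) : E :=
  ((n : ℝ) + 1)⁻¹ • ∑ k ∈ range (n + 1), (T ^ k) x

lemma cesaroMean_mem (hK : Convex ℝ K) (hT : Set.MapsTo T K K) (hx : x ∈ K) (n : ℕ) :
    cesaroMean T x n ∈ K := by
  rw [cesaroMean, smul_sum]
  refine hK.sum_mem (fun _ _ => by positivity) ?_ fun k _ => ?_
  · simp only [sum_const, card_range, nsmul_eq_mul]
    push_cast
    field_simp
  · exact pow_apply_mem T x hT hx k

lemma apply_cesaroMean_sub_cesaroMean (n : ℕ) :
    T (cesaroMean T x n) - cesaroMean T x n = ((n : ℝ) + 1)⁻¹ • ((T ^ (n + 1)) x - x) := by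
  have hshift : ∀ k, T ((T ^ k) x) = (T ^ (k + 1)) x := fun k => by
    rw [pow_succ', mul_apply_eq_comp]
  simp only [cesaroMean, map_smul, map_sum, hshift, ← smul_sub, ← sum_sub_distrib,
    sum_range_sub (fun k => (T ^ k) x), pow_zero, one_apply_eq_self]

lemma tendsto_apply_cesaroMean_sub_cesaroMean (hK : Bornology.IsBounded K)
    (hT : Set.MapsTo T K K) (hx : x ∈ K) :
    Tendsto (fun n => T (cesaroMean T x n) - cesaroMean T x n) atTop (𝓝 0) := by
  obtain ⟨C, hC⟩ := isBounded_iff_forall_norm_le.1 hK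
  have hbound : ∀ n : ℕ,
      ‖T (cesaroMean T x n) - cesaroMean T x n‖ ≤ 2 * C * (1 / ((n : ℝ) + 1)) := by
    intro n
    have hpow := pow_apply_mem T x hT hx (n + 1)
    rw [apply_cesaroMean_sub_cesaroMean, norm_smul, Real.norm_of_nonneg (by positivity)]
    calc ((n : ℝ) + 1)⁻¹ * ‖(T ^ (n + 1)) x - x‖
        ≤ ((n : ℝ) + 1)⁻¹ * (C + C) := by
          gcongr
          exact (norm_sub_le _ _).trans (add_le_add (hC _ hpow) (hC _ hx))
      _ = 2 * C * (1 / ((n : ℝ) + 1)) := by ring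
  refine squeeze_zero_norm hbound ?_
  simpa using (tendsto_one_div_add_atTop_nhds_zero_nat (𝕜 := ℝ)).const_mul (2 * C)

theorem exists_isFixedPt_of_mapsTo (hK : IsCompact K) (hKc : Convex ℝ K) (hne : K.Nonempty)
    (hT : Set.MapsTo T K K) : ∃ y ∈ K, Function.IsFixedPt T y := by
  obtain ⟨x, hx⟩ := hne
  obtain ⟨y, hyK, φ, hφ, hlim⟩ := hK.tendsto_subseq (cesaroMean_mem T x hKc hT hx)
  have hdisp : Tendsto (fun n => T (cesaroMean T x (φ n)) - cesaroMean T x (φ n)) atTop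
      (𝓝 (T y - y)) :=
    ((T.continuous.tendsto y).comp hlim).sub hlim
  have hzero := (tendsto_apply_cesaroMean_sub_cesaroMean T x hK.isBounded hT hx).comp
    hφ.tendsto_atTop
  exact ⟨y, hyK, sub_eq_zero.1 (tendsto_nhds_unique hdisp hzero)⟩

end ContinuousLinearMap

lemma Matrix.vecMul_mem_stdSimplex_of_mem_rowStochastic {R n : Type*} [Fintype n] [DecidableEq n]
    [CommSemiring R] [PartialOrder R] [IsOrderedRing R] {M : Matrix n n R} {x : n → R}
    (hM : M ∈ rowStochastic R n) (hx : x ∈ stdSimplex R n) : x ᵥ* M ∈ stdSimplex R n := by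
  refine ⟨nonneg_vecMul_of_mem_rowStochastic hM hx.1, ?_⟩
  have h := vecMul_dotProduct_one_eq_one_rowStochastic hM (by rw [dotProduct_one]; exact hx.2)
  rwa [dotProduct_one] at h

/-- Every finite stochastic matrix admits at least one invariant
probability distribution. -/
theorem stmt_6 {I : Type*} [Fintype I] [Nonempty I]
    (P : I → I → ℝ)
    (hPnonneg : ∀ i j, 0 ≤ P i j)
    (hProw : ∀ i, ∑ j, P i j = 1) :
    ∃ π : I → ℝ, (∀ i, 0 ≤ π i) ∧ (∑ i, π i = 1) ∧
      ∀ j, π j = ∑ i, π i * P i j := by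
  classical
  have hP : (P : Matrix I I ℝ) ∈ rowStochastic ℝ I :=
    mem_rowStochastic_iff_sum.2 ⟨hPnonneg, hProw⟩
  obtain ⟨π, ⟨hπnonneg, hπsum⟩, hπfix⟩ :=
    (LinearMap.toContinuousLinearMap (vecMulLinear P)).exists_isFixedPt_of_mapsTo
      (isCompact_stdSimplex ℝ I) (convex_stdSimplex ℝ I)
      ⟨_, single_mem_stdSimplex ℝ (Classical.arbitrary I)⟩
      fun _ hx => vecMul_mem_stdSimplex_of_mem_rowStochastic hP hx
  exact ⟨π, hπnonneg, hπsum, fun j => (congrFun hπfix j).symm⟩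
end

section
/- Let a : ℝ^d → ℝ^{d×d} be a smooth symmetric-matrix-valued function, ρ, u, q : ℝ^d → ℝ smooth, and J : ℝ^d → ℝ^d smooth with div J = 0. Assume div(ρ a ∇q) = div(q J) and div(ρ a ∇u) = −div(u J) on an open set Ω. Then div(u ρ a ∇q) = div(q ρ a ∇u + q u J) on Ω. -/
open scoped Topology

/-- The gradient of a scalar function on `ℝ^d` (coordinates version). -/
noncomputable def gradVec {d : ℕ} (f : (Fin d → ℝ) → ℝ) (x : Fin d → ℝ) : Fin d → ℝ :=
  fun i => fderiv ℝ f x (Pi.single i 1)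

/-- The divergence of a vector field on `ℝ^d` (coordinates version). -/
noncomputable def divergence {d : ℕ} (F : (Fin d → ℝ) → (Fin d → ℝ)) (x : Fin d → ℝ) : ℝ :=
  ∑ i, fderiv ℝ (fun y => F y i) x (Pi.single i 1)

lemma stmt10_div_smul {d : ℕ} {f : (Fin d → ℝ) → ℝ} {F : (Fin d → ℝ) → Fin d → ℝ} {x : Fin d → ℝ}
    (hf : DifferentiableAt ℝ f x) (hF : ∀ i, DifferentiableAt ℝ (fun y => F y i) x) :
    divergence (fun y => f y • F y) x
      = (∑ i, fderiv ℝ f x (Pi.single i 1) * F x i) + f x * divergence F x := by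
  unfold divergence
  rw [Finset.mul_sum, ← Finset.sum_add_distrib]
  refine Finset.sum_congr rfl fun i _ => ?_
  have h : (fun y => (f y • F y) i) = fun y => f y * F y i := rfl
  rw [h, fderiv_fun_mul hf (hF i)]
  simp only [ContinuousLinearMap.add_apply, ContinuousLinearMap.smul_apply, smul_eq_mul]
  ring

lemma stmt10_div_add {d : ℕ} {F G : (Fin d → ℝ) → Fin d → ℝ} {x : Fin d → ℝ}
    (hF : ∀ i, DifferentiableAt ℝ (fun y => F y i) x)
    (hG : ∀ i, DifferentiableAt ℝ (fun y => G y i) x) :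
    divergence (fun y => F y + G y) x = divergence F x + divergence G x := by
  unfold divergence
  rw [← Finset.sum_add_distrib]
  refine Finset.sum_congr rfl fun i _ => ?_
  have h : (fun y => (F y + G y) i) = fun y => F y i + G y i := rfl
  rw [h, fderiv_fun_add (hF i) (hG i)]
  simp

lemma stmt10_gradDiff {d : ℕ} {f : (Fin d → ℝ) → ℝ} {x : Fin d → ℝ}
    (hf : ContDiffAt ℝ (⊤ : ℕ∞) f x) (i : Fin d) :
    DifferentiableAt ℝ (fun y => gradVec f y i) x := by
  have h1 : DifferentiableAt ℝ (fderiv ℝ f) x :=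
    (hf.fderiv_right (m := 1) (WithTop.coe_le_coe.mpr le_top)).differentiableAt one_ne_zero
  exact h1.clm_apply (differentiableAt_const _)

/-- Let `a` be a smooth symmetric-matrix field, `ρ, u, q` smooth scalar
fields and `J` a smooth divergence-free vector field on an open set `Ω ⊆ ℝ^d`.
If `div(ρ a ∇q) = div(q J)` and `div(ρ a ∇u) = −div(u J)` on `Ω`, then
`div(u ρ a ∇q) = div(q ρ a ∇u + q u J)` on `Ω`. -/
theorem stmt_10 {d : ℕ} (Ω : Set (Fin d → ℝ)) (hΩ : IsOpen Ω)
    (a : (Fin d → ℝ) → Matrix (Fin d) (Fin d) ℝ)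
    (ρ u q : (Fin d → ℝ) → ℝ) (J : (Fin d → ℝ) → (Fin d → ℝ))
    (ha : ∀ i j, ContDiffOn ℝ (⊤ : ℕ∞) (fun x => a x i j) Ω)
    (hasymm : ∀ x i j, a x i j = a x j i)
    (hρ : ContDiffOn ℝ (⊤ : ℕ∞) ρ Ω) (hu : ContDiffOn ℝ (⊤ : ℕ∞) u Ω) (hq : ContDiffOn ℝ (⊤ : ℕ∞) q Ω)
    (hJ : ∀ i, ContDiffOn ℝ (⊤ : ℕ∞) (fun x => J x i) Ω)
    (hdivJ : ∀ x ∈ Ω, divergence J x = 0)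
    (h1 : ∀ x ∈ Ω,
      divergence (fun y => ρ y • (a y).mulVec (gradVec q y)) x =
        divergence (fun y => q y • J y) x)
    (h2 : ∀ x ∈ Ω,
      divergence (fun y => ρ y • (a y).mulVec (gradVec u y)) x =
        - divergence (fun y => u y • J y) x) :
    ∀ x ∈ Ω,
      divergence (fun y => u y • (ρ y • (a y).mulVec (gradVec q y))) x =
        divergence (fun y =>
          (q y • (ρ y • (a y).mulVec (gradVec u y))) + (q y * u y) • J y) x := by
  intro x hx
  have hxnhds : Ω ∈ 𝓝 x := hΩ.mem_nhds hx
  have hρx : DifferentiableAt ℝ ρ x := (hρ.contDiffAt hxnhds).differentiableAt (by simp)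
  have hux : DifferentiableAt ℝ u x := (hu.contDiffAt hxnhds).differentiableAt (by simp)
  have hqx : DifferentiableAt ℝ q x := (hq.contDiffAt hxnhds).differentiableAt (by simp)
  have hJx : ∀ i, DifferentiableAt ℝ (fun y => J y i) x :=
    fun i => ((hJ i).contDiffAt hxnhds).differentiableAt (by simp)
  have hax : ∀ i j, DifferentiableAt ℝ (fun y => a y i j) x :=
    fun i j => ((ha i j).contDiffAt hxnhds).differentiableAt (by simp)
  have hgq : ∀ i, DifferentiableAt ℝ (fun y => gradVec q y i) x :=
    stmt10_gradDiff (hq.contDiffAt hxnhds)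
  have hgu : ∀ i, DifferentiableAt ℝ (fun y => gradVec u y i) x :=
    stmt10_gradDiff (hu.contDiffAt hxnhds)
  -- components of ρ • a ∇q and ρ • a ∇u are differentiable
  have hcompeq : ∀ (f : (Fin d → ℝ) → ℝ) (i : Fin d),
      (fun y => (ρ y • (a y).mulVec (gradVec f y)) i)
        = fun y => ρ y * ∑ j, a y i j * gradVec f y j := by
    intro f i; funext y
    simp only [Pi.smul_apply, smul_eq_mul, Matrix.mulVec, dotProduct]
  have hFq : ∀ i, DifferentiableAt ℝ
      (fun y => (ρ y • (a y).mulVec (gradVec q y)) i) x := by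
    intro i; rw [hcompeq q i]
    exact hρx.mul (DifferentiableAt.fun_sum fun j _ => (hax i j).mul (hgq j))
  have hFu : ∀ i, DifferentiableAt ℝ
      (fun y => (ρ y • (a y).mulVec (gradVec u y)) i) x := by
    intro i; rw [hcompeq u i]
    exact hρx.mul (DifferentiableAt.fun_sum fun j _ => (hax i j).mul (hgu j))
  -- abbreviations
  set gq : Fin d → ℝ := fun i => fderiv ℝ q x (Pi.single i 1) with hgqdef
  set gu : Fin d → ℝ := fun i => fderiv ℝ u x (Pi.single i 1) with hgudef
  -- expand the left-hand side
  have hL := stmt10_div_smul (f := u) hux hFq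
  -- div (q • J)
  have hqJ := stmt10_div_smul (f := q) hqx hJx
  -- div (u • J)
  have huJ := stmt10_div_smul (f := u) hux hJx
  -- div (q • (ρ • a ∇u))
  have hR1 := stmt10_div_smul (f := q) hqx hFu
  -- div ((q*u) • J)
  have hR2 := stmt10_div_smul (f := fun y => q y * u y) (hqx.mul hux) hJx
  have hqu : ∀ i : Fin d, fderiv ℝ (fun y => q y * u y) x (Pi.single i 1)
      = q x * gu i + u x * gq i := by
    intro i
    rw [fderiv_fun_mul hqx hux]
    simp [hgqdef, hgudef]
  have hsum : divergence (fun y =>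
        (q y • (ρ y • (a y).mulVec (gradVec u y))) + (q y * u y) • J y) x
      = divergence (fun y => q y • (ρ y • (a y).mulVec (gradVec u y))) x
        + divergence (fun y => (q y * u y) • J y) x := by
    refine stmt10_div_add (fun i => ?_) (fun i => ?_)
    · exact (hqx.mul (hFu i)).congr_of_eventuallyEq (by filter_upwards with y; rfl)
    · exact ((hqx.mul hux).mul (hJx i)).congr_of_eventuallyEq (by filter_upwards with y; rfl)
  -- the symmetry identity
  have key : ∑ i, gu i * (ρ x • (a x).mulVec (gradVec q x)) i
      = ∑ i, gq i * (ρ x • (a x).mulVec (gradVec u x)) i := by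
    have e : ∀ (f : (Fin d → ℝ) → ℝ) (g : Fin d → ℝ),
        (∑ i, g i * (ρ x • (a x).mulVec (gradVec f x)) i)
          = ∑ i, ∑ j, g i * (ρ x * (a x i j * gradVec f x j)) := by
      intro f g
      refine Finset.sum_congr rfl fun i _ => ?_
      simp only [Pi.smul_apply, smul_eq_mul, Matrix.mulVec, dotProduct]
      rw [Finset.mul_sum, Finset.mul_sum]
    rw [e q gu, e u gq, Finset.sum_comm]
    refine Finset.sum_congr rfl fun i _ => Finset.sum_congr rfl fun j _ => ?_
    rw [hasymm x j i]
    have : gradVec q x i = gq i := rfl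
    have : gradVec u x j = gu j := rfl
    simp only [show gradVec q x i = gq i from rfl, show gradVec u x j = gu j from rfl]
    ring
  have e1 : ∀ i : Fin d, (fderiv ℝ q x) (Pi.single i 1) = gq i := fun _ => rfl
  have e2 : ∀ i : Fin d, (fderiv ℝ u x) (Pi.single i 1) = gu i := fun _ => rfl
  have expand : (∑ i, (q x * gu i + u x * gq i) * J x i)
      = q x * (∑ i, gu i * J x i) + u x * (∑ i, gq i * J x i) := by
    rw [Finset.mul_sum, Finset.mul_sum, ← Finset.sum_add_distrib]
    exact Finset.sum_congr rfl fun i _ => by ring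
  rw [hL, hsum, hR1, hR2, h1 x hx, hqJ, h2 x hx, huJ, hdivJ x hx]
  simp only [hqu, e1, e2]
  rw [key, expand]
  ring
end

section
/- Let P be an irreducible stochastic matrix on a finite set I, j ∈ I fixed, and t_i ≥ 0 for all i. Define h_i = E_i[Σ_{n=0}^{D-1} t_{ξ_n}] where D is the first hitting time of j. Then h_i < ∞ for all i, h_j = 0, and (h_i) solves h_i = t_i + Σ_{k∈I} p_{i,k} h_k for all i ≠ j. In particular the discrete Poisson problem with boundary condition h_j = 0 has the expected-accumulated-cost vector as its unique solution. -/
/-!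
Let `Q` be `P` with the row of `j` replaced by zero (the chain killed on reaching `j`) and let
`w` agree with `t` off `j` and vanish at `j`. Expanding over paths,
`E_i[t(ξ_n); ξ_0, …, ξ_n ≠ j] = (Qⁿ w)_i`, so `h` is the potential `∑ₙ Qⁿ w`, which satisfies
`h = w + Q h`: this is the Poisson problem with `h j = 0`.
By irreducibility every state reaches `j` with positive probability within some fixed number `m`
of steps, so `Qᵐ` maps `e = 1_{≠ j}` below `c • e` for some `c < 1` and `∑ₙ Qⁿ e` is finite.
This bounds `h`, and for a bounded solution `y = ∑_{n<N} Qⁿ w + Q^N y` the remainder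
`Q^N y ≤ (sup y) • Q^N e` tends to zero, so `y = h`.
-/

open MeasureTheory Finset Filter Matrix
open scoped ENNReal NNReal

namespace Matrix

variable {I R : Type*} [Fintype I] [DecidableEq I]

theorem pow_mulVec_apply_eq_sum_paths [CommSemiring R] (M : Matrix I I R) (w : I → R)
    (n : ℕ) (i : I) :
    (M ^ n *ᵥ w) i = ∑ s : Fin (n + 1) → I,
      (if s 0 = i then 1 else 0) * (∏ k : Fin n, M (s k.castSucc) (s k.succ)) *
        w (s (Fin.last n)) := by
  induction n generalizing i with
  | zero =>
    rw [← (Equiv.funUnique (Fin 1) I).symm.sum_comp]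
    simp [Fin.last]
  | succ n ih =>
    rw [← (Fin.consEquiv fun _ => I).sum_comp, Fintype.sum_prod_type, sum_eq_single i]
    · rw [pow_succ', ← mulVec_mulVec]
      simp only [mulVec, dotProduct] at ih ⊢
      simp only [ih, mul_sum]
      rw [sum_comm]
      refine sum_congr rfl fun s _ => ?_
      simp [Fin.prod_univ_succ, ← Fin.succ_last, mul_assoc]
    · intro a _ ha
      simp [ha]
    · simp

omit [Fintype I] in
theorem prod_updateRow_zero_mul_update [CommMonoidWithZero R] (M : Matrix I I R) (v : I → R)
    (j : I) {n : ℕ} (s : Fin (n + 1) → I) :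
    (∏ k : Fin n, M.updateRow j 0 (s k.castSucc) (s k.succ)) *
        Function.update v j 0 (s (Fin.last n)) =
      (∏ k : Fin n, M (s k.castSucc) (s k.succ)) *
        if ∀ k, s k ≠ j then v (s (Fin.last n)) else 0 := by
  split_ifs with hs
  · simp [updateRow_ne, hs]
  · push Not at hs
    obtain ⟨k, hk⟩ := hs
    induction k using Fin.lastCases with
    | last => simp [hk]
    | cast k => rw [prod_eq_zero (mem_univ k) (by simp [hk]), zero_mul, mul_zero]

theorem eq_sum_pow_mulVec_add_pow_mulVec [Semiring R] {M : Matrix I I R} {w y : I → R}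
    (hy : y = w + M *ᵥ y) (N : ℕ) :
    y = ∑ n ∈ range N, M ^ n *ᵥ w + M ^ N *ᵥ y := by
  induction N with
  | zero => simp
  | succ N ih =>
    conv_lhs => rw [hy, ih]
    simp only [mulVec_add, mulVec_sum, mulVec_mulVec, ← pow_succ', sum_range_succ',
      pow_zero, one_mulVec]
    abel

theorem eq_update_add_updateRow_mulVec_iff [Semiring R] {M : Matrix I I R} {j : I}
    {t y : I → R} :
    y = Function.update t j 0 + M.updateRow j 0 *ᵥ y ↔
      y j = 0 ∧ ∀ i ≠ j, y i = t i + (M *ᵥ y) i := by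
  rw [updateRow_mulVec, zero_dotProduct, ← Function.update_add, add_zero,
    Function.eq_update_iff]
  rfl

theorem pow_mulVec_one [Semiring R] {M : Matrix I I R} (hM : M *ᵥ 1 = 1) (n : ℕ) :
    M ^ n *ᵥ 1 = 1 := by
  induction n with
  | zero => simp
  | succ n ih => rw [pow_succ, ← mulVec_mulVec, hM, ih]

omit [DecidableEq I] in
theorem mulVec_le_mulVec [CommSemiring R] [PartialOrder R] [CanonicallyOrderedAdd R]
    {M N : Matrix I I R} {v w : I → R} (hMN : ∀ i k, M i k ≤ N i k) (hvw : v ≤ w) :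
    M *ᵥ v ≤ N *ᵥ w := fun i =>
  sum_le_sum fun k _ => mul_le_mul' (hMN i k) (hvw k)

theorem pow_mulVec_le_pow_mulVec [CommSemiring R] [PartialOrder R] [CanonicallyOrderedAdd R]
    {M N : Matrix I I R} (hMN : ∀ i k, M i k ≤ N i k) (v : I → R) (n : ℕ) :
    M ^ n *ᵥ v ≤ N ^ n *ᵥ v := by
  induction n with
  | zero => rfl
  | succ n ih =>
    rw [pow_succ', ← mulVec_mulVec, pow_succ', ← mulVec_mulVec]
    exact mulVec_le_mulVec hMN ih

theorem antitone_pow_mulVec [CommSemiring R] [PartialOrder R] [CanonicallyOrderedAdd R]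
    {M : Matrix I I R} {e : I → R} (he : M *ᵥ e ≤ e) : Antitone fun n => M ^ n *ᵥ e :=
  antitone_nat_of_succ_le fun n => by
    rw [pow_succ, ← mulVec_mulVec]
    exact mulVec_le_mulVec (fun _ _ => le_rfl) he

end Matrix

theorem ENNReal.tsum_ne_top_of_antitone_of_le_pow {u : ℕ → ℝ≥0∞} (hu : Antitone u) {m : ℕ}
    (hm : 0 < m) {c : ℝ≥0∞} (hc : c < 1) (hle : ∀ q, u (m * q) ≤ c ^ q) :
    ∑' n, u n ≠ ∞ := by
  have : NeZero m := ⟨hm.ne'⟩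
  have hblock : ∀ x : ℕ × Fin m, u (x.1 * m + x.2) ≤ c ^ x.1 := fun x =>
    (hu (by rw [mul_comm]; exact Nat.le_add_right _ _)).trans (hle x.1)
  refine ne_top_of_le_ne_top (b := m * (1 - c)⁻¹)
    (ENNReal.mul_ne_top (by simp) (ENNReal.inv_ne_top.2 (tsub_pos_of_lt hc).ne')) ?_
  calc ∑' n, u n = ∑' x : ℕ × Fin m, u (x.1 * m + x.2) :=
        ((Nat.divModEquiv m).symm.tsum_eq u).symm
    _ ≤ ∑' x : ℕ × Fin m, c ^ x.1 := ENNReal.tsum_le_tsum hblock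
    _ = m * (1 - c)⁻¹ := by
        rw [ENNReal.tsum_prod (f := fun q (_ : Fin m) => c ^ q), ← ENNReal.tsum_geometric,
          ← ENNReal.tsum_mul_left]
        simp

namespace Matrix

variable {I : Type*} [Fintype I] [DecidableEq I]

noncomputable def potential (Q : Matrix I I ℝ≥0∞) (w : I → ℝ≥0∞) (i : I) : ℝ≥0∞ :=
  ∑' n, (Q ^ n *ᵥ w) i

section Potential

variable {Q : Matrix I I ℝ≥0∞} {w e y : I → ℝ≥0∞}

theorem potential_eq_add_mulVec : potential Q w = w + Q *ᵥ potential Q w := by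
  ext i
  simp only [potential, Pi.add_apply]
  rw [tsum_eq_zero_add' ENNReal.summable, pow_zero, one_mulVec]
  congr 1
  simp_rw [pow_succ', ← mulVec_mulVec]
  simp only [mulVec, dotProduct, potential, ← ENNReal.tsum_mul_left]
  exact Summable.tsum_finsetSum fun _ _ => ENNReal.summable

theorem potential_le_of_eq (hy : y = w + Q *ᵥ y) : potential Q w ≤ y := fun i => by
  rw [potential, ENNReal.tsum_eq_iSup_nat]
  refine iSup_le fun N => ?_
  rw [eq_sum_pow_mulVec_add_pow_mulVec hy N, Pi.add_apply, Finset.sum_apply]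
  exact le_self_add

theorem potential_smul (C : ℝ≥0∞) : potential Q (C • w) = C • potential Q w := by
  ext i
  simp [potential, mulVec_smul, ENNReal.tsum_mul_left]

theorem potential_mono {v : I → ℝ≥0∞} (h : v ≤ w) : potential Q v ≤ potential Q w := fun i =>
  ENNReal.tsum_le_tsum fun _ => mulVec_le_mulVec (fun _ _ => le_rfl) h i

theorem potential_lt_top (he : ∀ i, potential Q e i ≠ ∞) {C : ℝ≥0∞} (hC : C ≠ ∞)
    (hw : w ≤ C • e) (i : I) : potential Q w i < ∞ :=
  calc potential Q w i ≤ C * potential Q e i := by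
        simpa [potential_smul] using potential_mono (Q := Q) hw i
    _ < ∞ := ENNReal.mul_lt_top hC.lt_top (he i).lt_top

theorem eq_potential_of_eq (he : ∀ i, potential Q e i ≠ ∞) {C : ℝ≥0∞} (hC : C ≠ ∞)
    (hyC : y ≤ C • e) (hy : y = w + Q *ᵥ y) : y = potential Q w := by
  refine le_antisymm (fun i => ?_) (potential_le_of_eq hy)
  have hlim : Tendsto (fun N => potential Q w i + C * (Q ^ N *ᵥ e) i) atTop
      (nhds (potential Q w i)) := by
    simpa using tendsto_const_nhds.add (ENNReal.Tendsto.const_mul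
      (ENNReal.tendsto_atTop_zero_of_tsum_ne_top (he i)) (Or.inr hC))
  refine ge_of_tendsto hlim (Eventually.of_forall fun N => ?_)
  rw [eq_sum_pow_mulVec_add_pow_mulVec hy N, Pi.add_apply, Finset.sum_apply]
  gcongr
  · exact ENNReal.sum_le_tsum (f := fun n => (Q ^ n *ᵥ w) i) (range N)
  · simpa [mulVec_smul] using mulVec_le_mulVec (fun _ _ => le_rfl) hyC (M := Q ^ N) i

theorem pow_mul_mulVec_le_pow_smul {m : ℕ} {c : ℝ≥0∞} (hm : Q ^ m *ᵥ e ≤ c • e) (q : ℕ) :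
    Q ^ (m * q) *ᵥ e ≤ c ^ q • e := by
  induction q with
  | zero => simp
  | succ q ih =>
    calc Q ^ (m * (q + 1)) *ᵥ e = Q ^ (m * q) *ᵥ (Q ^ m *ᵥ e) := by
          rw [mulVec_mulVec, ← pow_add, mul_add, mul_one]
      _ ≤ Q ^ (m * q) *ᵥ (c • e) := mulVec_le_mulVec (fun _ _ => le_rfl) hm
      _ ≤ c • (c ^ q • e) := by
          rw [mulVec_smul]
          exact fun i => mul_le_mul_right (ih i) c
      _ = c ^ (q + 1) • e := by rw [smul_smul, pow_succ']

end Potential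

section Killed

variable {P : Matrix I I ℝ≥0∞} {j : I}

omit [Fintype I] in
theorem le_smul_update_one {v : I → ℝ≥0∞} {c : ℝ≥0∞} (hj : v j = 0)
    (hc : ∀ i ≠ j, v i ≤ c) : v ≤ c • Function.update (1 : I → ℝ≥0∞) j 0 := fun i => by
  rcases eq_or_ne i j with rfl | hi
  · simp [hj]
  · simpa [hi] using hc i hi

omit [Fintype I] in
theorem update_one_le_one : Function.update (1 : I → ℝ≥0∞) j 0 ≤ 1 := fun i => by
  rcases eq_or_ne i j with rfl | hi <;> simp [*]

omit [Fintype I] in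
theorem updateRow_zero_le (i k : I) : P.updateRow j 0 i k ≤ P i k := by
  rcases eq_or_ne i j with rfl | hi <;> simp [updateRow_apply, *]

theorem updateRow_zero_mulVec_update_one_le (hP : P *ᵥ 1 = 1) :
    P.updateRow j 0 *ᵥ Function.update 1 j 0 ≤ Function.update (1 : I → ℝ≥0∞) j 0 := by
  intro i
  rw [updateRow_mulVec]
  rcases eq_or_ne i j with rfl | hi
  · simp
  · rw [Function.update_of_ne hi, Function.update_of_ne hi]
    exact (mulVec_le_mulVec (fun _ _ => le_rfl) update_one_le_one i).trans_eq (congr_fun hP i)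

theorem pow_mulVec_update_one_lt_one (hP : P *ᵥ 1 = 1) {n : ℕ} {i : I}
    (hpos : 0 < (P ^ n) i j) : (P ^ n *ᵥ Function.update 1 j 0) i < 1 := by
  have hsplit : Function.update (1 : I → ℝ≥0∞) j 0 + Pi.single j 1 = 1 := by
    ext k; rcases eq_or_ne k j with rfl | hk <;> simp [*]
  have hsum : (P ^ n *ᵥ Function.update 1 j 0) i + (P ^ n) i j = 1 := by
    simpa [mulVec_add, pow_mulVec_one hP] using congr_fun (congr_arg (P ^ n *ᵥ ·) hsplit) i
  rw [← hsum]
  exact ENNReal.lt_add_right (ne_top_of_le_ne_top ENNReal.one_ne_top (hsum ▸ le_self_add))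
    hpos.ne'

theorem exists_pow_updateRow_mulVec_le_smul (hP : P *ᵥ 1 = 1)
    (hreach : ∀ i, ∃ n, 0 < (P ^ n) i j) :
    ∃ m, 0 < m ∧ ∃ c : ℝ≥0∞, c < 1 ∧ P.updateRow j 0 ^ m *ᵥ Function.update 1 j 0 ≤
      c • Function.update (1 : I → ℝ≥0∞) j 0 := by
  choose N hN using hreach
  -- `Qⁿ e` decreases in `n`, so one `m` beyond every `N i` serves all states at once.
  set m := univ.sup N + 1
  set u := P.updateRow j 0 ^ m *ᵥ Function.update 1 j 0
  refine ⟨m, Nat.succ_pos _, univ.sup u, ?_,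
    le_smul_update_one ?_ fun i _ => le_sup (f := u) (mem_univ i)⟩
  · refine (Finset.sup_lt_iff zero_lt_one).2 fun i _ => ?_
    calc u i ≤ (P.updateRow j 0 ^ N i *ᵥ Function.update 1 j 0) i :=
          antitone_pow_mulVec (updateRow_zero_mulVec_update_one_le hP)
            ((le_sup (mem_univ i)).trans (Nat.le_succ _)) i
      _ ≤ (P ^ N i *ᵥ Function.update 1 j 0) i :=
          pow_mulVec_le_pow_mulVec updateRow_zero_le _ _ i
      _ < 1 := pow_mulVec_update_one_lt_one hP (hN i)
  · simp [m, pow_succ', ← mulVec_mulVec, updateRow_mulVec]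

theorem potential_updateRow_update_one_ne_top (hP : P *ᵥ 1 = 1)
    (hreach : ∀ i, ∃ n, 0 < (P ^ n) i j) (i : I) :
    potential (P.updateRow j 0) (Function.update 1 j 0) i ≠ ∞ := by
  obtain ⟨m, hm, c, hc, hmc⟩ := exists_pow_updateRow_mulVec_le_smul hP hreach
  refine ENNReal.tsum_ne_top_of_antitone_of_le_pow
    (fun a b hab => antitone_pow_mulVec (updateRow_zero_mulVec_update_one_le hP) hab i) hm hc
    fun q => ?_
  calc _ ≤ (c ^ q • Function.update (1 : I → ℝ≥0∞) j 0) i := pow_mul_mulVec_le_pow_smul hmc q i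
    _ ≤ c ^ q := by simpa using mul_le_of_le_one_right' (update_one_le_one (j := j) i)

end Killed

end Matrix

section PathLaw

variable {Ω I : Type*} [MeasurableSpace Ω] [DecidableEq I]
  {ξ : ℕ → Ω → I} {μ : Measure Ω} {P : Matrix I I ℝ≥0∞} {i : I}

def IsMarkovChainFrom (ξ : ℕ → Ω → I) (μ : Measure Ω) (P : Matrix I I ℝ≥0∞) (i : I) : Prop :=
  ∀ n (s : ℕ → I), μ {ω | ∀ k ≤ n, ξ k ω = s k} =
    (if s 0 = i then 1 else 0) * ∏ k ∈ range n, P (s k) (s (k + 1))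

theorem IsMarkovChainFrom.measure_path_eq (hξ : IsMarkovChainFrom ξ μ P i)
    {n : ℕ} (s : Fin (n + 1) → I) :
    μ {ω | ∀ k : Fin (n + 1), ξ k ω = s k} =
      (if s 0 = i then 1 else 0) * ∏ k : Fin n, P (s k.castSucc) (s k.succ) := by
  convert hξ n (fun k => s (Fin.ofNat (n + 1) k)) using 2
  · ext ω
    simp only [Set.mem_ofPred_eq, Fin.forall_iff, Nat.lt_succ_iff, Fin.ofNat_eq_cast]
    exact forall₂_congr fun k hk => by rw [Fin.natCast_eq_mk (Nat.lt_succ_of_le hk)]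
  · simp
  · rw [← Fin.prod_univ_eq_prod_range
      (fun k => P (s (Fin.ofNat (n + 1) k)) (s (Fin.ofNat (n + 1) (k + 1))))]
    refine prod_congr rfl fun k _ => ?_
    rw [Fin.ofNat_eq_cast, Fin.ofNat_eq_cast, Fin.natCast_eq_mk (Nat.lt_succ_of_lt k.isLt),
      Fin.natCast_eq_mk (Nat.succ_lt_succ k.isLt)]
    rfl

variable [Fintype I] [MeasurableSpace I] [MeasurableSingletonClass I]

theorem IsMarkovChainFrom.lintegral_path_eq_sum (hξ : IsMarkovChainFrom ξ μ P i)
    (hmeas : ∀ n, Measurable (ξ n)) {n : ℕ} (g : (Fin (n + 1) → I) → ℝ≥0∞) :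
    ∫⁻ ω, g (fun k => ξ k ω) ∂μ = ∑ s, (if s 0 = i then 1 else 0) *
      (∏ k : Fin n, P (s k.castSucc) (s k.succ)) * g s := by
  have hpath : Measurable fun ω (k : Fin (n + 1)) => ξ k ω :=
    measurable_pi_lambda _ fun k => hmeas k
  rw [← lintegral_map (measurable_of_countable g) hpath, lintegral_fintype]
  refine sum_congr rfl fun s _ => ?_
  rw [Measure.map_apply hpath (measurableSet_singleton s), mul_comm, ← hξ.measure_path_eq]
  congr 2
  ext ω
  simp [funext_iff]

theorem IsMarkovChainFrom.lintegral_tsum_eq_potential_updateRow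
    (hξ : IsMarkovChainFrom ξ μ P i) (hmeas : ∀ n, Measurable (ξ n)) (j : I) (v : I → ℝ≥0∞) :
    ∫⁻ ω, ∑' n, (if ∀ k ≤ n, ξ k ω ≠ j then v (ξ n ω) else 0) ∂μ =
      potential (P.updateRow j 0) (Function.update v j 0) i := by
  let payoff (n : ℕ) (s : Fin (n + 1) → I) : ℝ≥0∞ :=
    if ∀ k, s k ≠ j then v (s (Fin.last n)) else 0
  have hpayoff : ∀ n ω, (if ∀ k ≤ n, ξ k ω ≠ j then v (ξ n ω) else 0) =
      payoff n fun k => ξ k ω := fun n ω => by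
    simp [payoff, Fin.forall_iff]
  simp_rw [hpayoff]
  have hpath (n : ℕ) : Measurable fun ω (k : Fin (n + 1)) => ξ k ω :=
    measurable_pi_lambda _ fun k => hmeas k
  rw [lintegral_tsum (f := fun n ω => payoff n fun k => ξ k ω) fun n =>
    ((measurable_of_countable (payoff n)).comp (hpath n)).aemeasurable]
  refine tsum_congr fun n => ?_
  rw [hξ.lintegral_path_eq_sum hmeas, pow_mulVec_apply_eq_sum_paths]
  refine sum_congr rfl fun s _ => ?_
  rw [mul_assoc, mul_assoc, prod_updateRow_zero_mul_update]

end PathLaw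

theorem stmt_11_general {Ω : Type*} [MeasurableSpace Ω]
    {I : Type*} [Fintype I] [DecidableEq I] [MeasurableSpace I] [MeasurableSingletonClass I]
    (ξ : ℕ → Ω → I) (hmeas : ∀ n, Measurable (ξ n))
    (μ : I → Measure Ω)
    (p : I → I → ℝ≥0∞) (hrow : ∀ i, ∑ k, p i k = 1)
    (P : Matrix I I ℝ≥0∞) (hP : ∀ i k, P i k = p i k)
    (hirr : ∀ i k : I, ∃ n : ℕ, 0 < (P ^ n) i k)
    (hmarkov : ∀ (i : I) (n : ℕ) (s : ℕ → I),
      μ i {ω | ∀ k ≤ n, ξ k ω = s k} =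
        (if s 0 = i then 1 else 0) * ∏ k ∈ Finset.range n, p (s k) (s (k + 1)))
    (j : I) (t : I → ℝ≥0) (h : I → ℝ≥0∞)
    (hdef : ∀ i, h i =
      ∫⁻ ω, (∑' n : ℕ,
        if ∀ k ≤ n, ξ k ω ≠ j then (t (ξ n ω) : ℝ≥0∞) else 0) ∂(μ i)) :
    (∀ i, h i < ∞) ∧
    h j = 0 ∧
    (∀ i, i ≠ j → h i = (t i : ℝ≥0∞) + ∑ k, p i k * h k) ∧
    (∀ y : I → ℝ≥0∞, (∀ i, y i < ∞) → y j = 0 →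
      (∀ i, i ≠ j → y i = (t i : ℝ≥0∞) + ∑ k, p i k * y k) → y = h) := by
  obtain rfl : P = p := funext₂ hP
  set w : I → ℝ≥0∞ := Function.update (fun i => (t i : ℝ≥0∞)) j 0
  have hstoch : P *ᵥ 1 = 1 := funext fun i => by simpa [mulVec, dotProduct] using hrow i
  have hpoisson (y : I → ℝ≥0∞) : y = w + P.updateRow j 0 *ᵥ y ↔
      y j = 0 ∧ ∀ i ≠ j, y i = t i + ∑ k, P i k * y k :=
    eq_update_add_updateRow_mulVec_iff
  have hchain (i : I) : IsMarkovChainFrom ξ (μ i) P i := hmarkov i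
  have hh : h = potential (P.updateRow j 0) w := funext fun i => (hdef i).trans <|
    (hchain i).lintegral_tsum_eq_potential_updateRow hmeas j fun k => (t k : ℝ≥0∞)
  subst hh
  have hsurv := potential_updateRow_update_one_ne_top hstoch fun i => hirr i j
  have hw : w ≤ ((univ.sup t : ℝ≥0) : ℝ≥0∞) • Function.update (1 : I → ℝ≥0∞) j 0 :=
    le_smul_update_one (by simp [w]) fun i hi => by
      simpa [w, hi] using ENNReal.coe_le_coe.2 (le_sup (f := t) (mem_univ i))
  obtain ⟨hj, heq⟩ := (hpoisson _).1 potential_eq_add_mulVec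
  refine ⟨potential_lt_top hsurv ENNReal.coe_ne_top hw, hj, heq, fun y hyfin hyj hy => ?_⟩
  have hsup : univ.sup y ≠ ∞ :=
    ((Finset.sup_lt_iff ENNReal.zero_lt_top).2 fun i _ => hyfin i).ne
  exact eq_potential_of_eq hsurv hsup (le_smul_update_one hyj fun i _ => le_sup (mem_univ i))
    ((hpoisson y).2 ⟨hyj, hy⟩)

/-- For an irreducible stochastic matrix `p` on a finite set `I`, a fixed
target `j` and a nonnegative cost `t`, the expected accumulated cost
`h i = E_i[∑_{n=0}^{D-1} t (ξ n)]` before the first hitting time `D` of `j` is finite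
for every `i`, satisfies `h j = 0` and `h i = t i + ∑ k, p i k * h k` for `i ≠ j`;
moreover it is the unique finite solution of this discrete Poisson problem with
boundary condition `h j = 0`. -/
theorem stmt_11 {Ω : Type*} [MeasurableSpace Ω]
    {I : Type*} [Fintype I] [DecidableEq I] [MeasurableSpace I] [MeasurableSingletonClass I]
    (ξ : ℕ → Ω → I) (hmeas : ∀ n, Measurable (ξ n))
    (μ : I → Measure Ω) (hprob : ∀ i, IsProbabilityMeasure (μ i))
    (p : I → I → ℝ≥0∞) (hrow : ∀ i, ∑ k, p i k = 1)
    (P : Matrix I I ℝ≥0∞) (hP : ∀ i k, P i k = p i k)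
    (hirr : ∀ i k : I, ∃ n : ℕ, 0 < (P ^ n) i k)
    (hmarkov : ∀ (i : I) (n : ℕ) (s : ℕ → I),
      μ i {ω | ∀ k ≤ n, ξ k ω = s k} =
        (if s 0 = i then 1 else 0) * ∏ k ∈ Finset.range n, p (s k) (s (k + 1)))
    (j : I) (t : I → ℝ≥0) (h : I → ℝ≥0∞)
    (hdef : ∀ i, h i =
      ∫⁻ ω, (∑' n : ℕ,
        if ∀ k ≤ n, ξ k ω ≠ j then (t (ξ n ω) : ℝ≥0∞) else 0) ∂(μ i)) :
    (∀ i, h i < ∞) ∧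
    h j = 0 ∧
    (∀ i, i ≠ j → h i = (t i : ℝ≥0∞) + ∑ k, p i k * h k) ∧
    (∀ y : I → ℝ≥0∞, (∀ i, y i < ∞) → y j = 0 →
      (∀ i, i ≠ j → y i = (t i : ℝ≥0∞) + ∑ k, p i k * y k) → y = h) :=
  stmt_11_general ξ hmeas μ p hrow P hP hirr hmarkov j t h hdef
end
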